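/- arXiv:2508.13501 — 3 statements merged into one kernel-verified Lean document; each statement's English description precedes it below -/
import Mathlib

section
/- For every λ > 0 there exist λ̃ ∈ (0,1) and ρ₀ ∈ (0,1) such that for all ρ ∈ (0,ρ₀) and all x ≥ 1: exp( x/(log(1+x))^{1+λ} ) · e^{−ρx} ≤ exp( exp( ρ^{−λ̃} ) ). -/
noncomputable section

/-- **Appendix lemma**: for every `λ > 0` there are `λ̃ ∈ (0,1)` and `ρ₀ ∈ (0,1)` such that
for all `ρ ∈ (0,ρ₀)` and all `x ≥ 1`,
`exp(x/(log(1+x))^{1+λ}) e^{-ρx} ≤ exp(exp(ρ^{-λ̃}))`. -/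
theorem control_function_for_log_power (lam : ℝ) (hlam : 0 < lam) :
    ∃ lamt ∈ Set.Ioo (0 : ℝ) 1, ∃ ρ₀ ∈ Set.Ioo (0 : ℝ) 1,
      ∀ ρ ∈ Set.Ioo (0 : ℝ) ρ₀, ∀ x : ℝ, 1 ≤ x →
        Real.exp (x / Real.log (1 + x) ^ (1 + lam)) * Real.exp (-ρ * x) ≤
          Real.exp (Real.exp (ρ ^ (-lamt))) := by
  set α : ℝ := 1 / (1 + lam) with hα
  have hα0 : 0 < α := by positivity
  have hα1 : α < 1 := by
    rw [hα, div_lt_one (by linarith)]; linarith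
  set lamt : ℝ := (α + 1) / 2 with hlamt
  have hlt0 : 0 < lamt := by positivity
  have hlt1 : lamt < 1 := by rw [hlamt]; linarith
  set δ : ℝ := lamt - α with hδ
  have hδ0 : 0 < δ := by rw [hδ, hlamt]; linarith
  set K : ℝ := (Real.log 2) ^ (-(1+lam)) with hK
  have hlog2 : 0 < Real.log 2 := Real.log_pos one_lt_two
  have hK0 : 0 < K := Real.rpow_pos_of_pos hlog2 _
  set M : ℝ := max (Real.log K) 0 with hM
  have hM0 : 0 ≤ M := le_max_right _ _
  have h1M : (0:ℝ) < 1 + M := by linarith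
  set ρ₀ : ℝ := min (1/2) ((1+M) ^ (-(1/δ))) with hρ₀
  have hρ₀0 : 0 < ρ₀ := lt_min (by norm_num) (Real.rpow_pos_of_pos h1M _)
  refine ⟨lamt, ⟨hlt0, hlt1⟩, ρ₀, ⟨hρ₀0, lt_of_le_of_lt (min_le_left _ _) (by norm_num)⟩, ?_⟩
  rintro ρ ⟨hρ0, hρρ₀⟩ x hx
  have hρ1 : ρ < 1 := lt_of_lt_of_le hρρ₀ ((min_le_left _ _).trans (by norm_num))
  rw [← Real.exp_add, Real.exp_le_exp]
  have hx0 : 0 < x := by linarith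
  have hlog1x : Real.log 2 ≤ Real.log (1 + x) := Real.log_le_log (by norm_num) (by linarith)
  have hlog1x0 : 0 < Real.log (1 + x) := lt_of_lt_of_le hlog2 hlog1x
  have hden0 : 0 < Real.log (1 + x) ^ (1 + lam) := Real.rpow_pos_of_pos hlog1x0 _
  have hexp0 : (0:ℝ) < Real.exp (ρ ^ (-lamt)) := Real.exp_pos _
  -- `ρ^{-δ} ≥ 1 + M`
  have hρδ : 1 + M ≤ ρ ^ (-δ) := by
    have hρρ₀' : ρ < (1+M) ^ (-(1/δ)) := lt_of_lt_of_le hρρ₀ (min_le_right _ _)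
    have h1 : ρ ^ δ < ((1+M) ^ (-(1/δ))) ^ δ :=
      Real.rpow_lt_rpow hρ0.le hρρ₀' hδ0
    have h2 : ((1+M) ^ (-(1/δ))) ^ δ = (1+M)⁻¹ := by
      rw [← Real.rpow_mul h1M.le]
      rw [show -(1/δ) * δ = -1 by field_simp]
      exact Real.rpow_neg_one _
    rw [h2] at h1
    have h3 : ((1+M)⁻¹)⁻¹ ≤ (ρ ^ δ)⁻¹ :=
      inv_anti₀ (Real.rpow_pos_of_pos hρ0 _) h1.le
    rw [inv_inv] at h3
    rwa [Real.rpow_neg hρ0.le]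
  -- `ρ^{-α} ≥ 1`
  have hρα : 1 ≤ ρ ^ (-α) := by
    have : ρ ^ α < 1 := Real.rpow_lt_one hρ0.le hρ1 hα0
    rw [Real.rpow_neg hρ0.le]
    have h4 : (1:ℝ)⁻¹ ≤ (ρ ^ α)⁻¹ := inv_anti₀ (Real.rpow_pos_of_pos hρ0 α) this.le
    simpa using h4
  -- key: ρ^{-α} + M ≤ ρ^{-lamt}
  have hkey : ρ ^ (-α) + M ≤ ρ ^ (-lamt) := by
    have hsplit : ρ ^ (-lamt) = ρ ^ (-α) * ρ ^ (-δ) := by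
      rw [← Real.rpow_add hρ0]; ring_nf; rw [hδ]; congr 1; ring
    rw [hsplit]
    nlinarith [mul_le_mul_of_nonneg_left hρδ (le_trans zero_le_one hρα)]
  by_cases hcase : Real.exp (ρ ^ (-α)) ≤ x
  · -- large x : the exponent is nonpositive
    have hlogx : ρ ^ (-α) ≤ Real.log x := by
      have := Real.log_le_log (Real.exp_pos _) hcase
      rwa [Real.log_exp] at this
    have hlogx' : ρ ^ (-α) ≤ Real.log (1 + x) :=
      le_trans hlogx (Real.log_le_log hx0 (by linarith))
    have hden : ρ⁻¹ ≤ Real.log (1 + x) ^ (1 + lam) := by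
      have h1 : (ρ ^ (-α)) ^ (1 + lam) ≤ Real.log (1 + x) ^ (1 + lam) :=
        Real.rpow_le_rpow (Real.rpow_pos_of_pos hρ0 _).le hlogx' (by linarith)
      have h2 : (ρ ^ (-α)) ^ (1 + lam) = ρ⁻¹ := by
        rw [← Real.rpow_mul hρ0.le]
        rw [show -α * (1 + lam) = -1 by rw [hα]; field_simp]
        exact Real.rpow_neg_one _
      rwa [h2] at h1
    have hdiv : x / Real.log (1 + x) ^ (1 + lam) ≤ x / ρ⁻¹ :=
      div_le_div_of_nonneg_left hx0.le (by positivity) hden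
    have : x / ρ⁻¹ = ρ * x := by field_simp
    nlinarith [hexp0]
  · -- small x
    push_neg at hcase
    have hdiv : x / Real.log (1 + x) ^ (1 + lam) ≤ x * K := by
      have hden : (Real.log 2) ^ (1 + lam) ≤ Real.log (1 + x) ^ (1 + lam) :=
        Real.rpow_le_rpow hlog2.le hlog1x (by linarith)
      have h1 : x / Real.log (1 + x) ^ (1 + lam) ≤ x / (Real.log 2) ^ (1 + lam) :=
        div_le_div_of_nonneg_left hx0.le (Real.rpow_pos_of_pos hlog2 _) hden
      have h2 : x / (Real.log 2) ^ (1 + lam) = x * K := by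
        rw [hK, Real.rpow_neg hlog2.le, div_eq_mul_inv]
      rwa [h2] at h1
    have h3 : x * K ≤ Real.exp (ρ ^ (-α)) * K :=
      mul_le_mul_of_nonneg_right hcase.le hK0.le
    have h4 : Real.exp (ρ ^ (-α)) * K = Real.exp (ρ ^ (-α) + Real.log K) := by
      rw [Real.exp_add, Real.exp_log hK0]
    have h5 : Real.exp (ρ ^ (-α) + Real.log K) ≤ Real.exp (ρ ^ (-lamt)) := by
      apply Real.exp_le_exp.mpr
      have : Real.log K ≤ M := le_max_left _ _
      linarith
    nlinarith [mul_pos hρ0 hx0]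
end
end

section
/- Let μ > 1. Equip [1,2]^ℤ with the product probability measure ℙ = ⊗_{j∈ℤ} Unif([1,2]) of uniform distributions on [1,2]. Then there exists a constant C > 0, depending only on μ, such that for every γ ∈ (0,1): ℙ( { ω ∈ [1,2]^ℤ : ω is not infinite-dimensional Diophantine with parameters γ, μ } ) ≤ C·γ. Consequently, ℙ-almost every ω ∈ [1,2]^ℤ is infinite-dimensional Diophantine with parameters γ, μ for some γ ∈ (0,1), i.e. ℙ( [1,2]^ℤ \ ⋃_{0<γ<1} D_{γ,μ} ) = 0. -/
open scoped BigOperators ENNReal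
open MeasureTheory

noncomputable section

/-- `⟨j⟩ = max {1, |j|}`. -/
def jwt (j : ℤ) : ℝ := max 1 |(j : ℝ)|

/-- `ω · ℓ = Σ_j ω_j ℓ_j` (a finite sum over the support of `ℓ`). -/
def omegaDot (ω : ℤ → ℝ) (ℓ : ℤ →₀ ℤ) : ℝ := ∑ j ∈ ℓ.support, ω j * (ℓ j : ℝ)

/-- Bourgain's infinite-dimensional Diophantine condition:
`|ω·ℓ| > γ ∏_j (1 + |ℓ_j|^μ ⟨j⟩^μ)⁻¹` for all nonzero `ℓ` (the factors over `j` outside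
the support of `ℓ` all equal `1`). -/
def IsDiophantine (γ μ : ℝ) (ω : ℤ → ℝ) : Prop :=
  ∀ ℓ : ℤ →₀ ℤ, ℓ ≠ 0 →
    γ * ∏ j ∈ ℓ.support, (1 + |(ℓ j : ℝ)| ^ μ * jwt j ^ μ)⁻¹ < |omegaDot ω ℓ|

def gfac (μ : ℝ) (j n : ℤ) : ℝ := (1 + |(n : ℝ)| ^ μ * jwt j ^ μ)⁻¹

def cweight (μ : ℝ) (ℓ : ℤ →₀ ℤ) : ℝ := ∏ j ∈ ℓ.support, gfac μ j (ℓ j)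

lemma one_le_jwt (j : ℤ) : 1 ≤ jwt j := le_max_left _ _

lemma jwt_pos (j : ℤ) : 0 < jwt j := lt_of_lt_of_le one_pos (one_le_jwt j)

lemma gfac_pos (μ : ℝ) (j n : ℤ) : 0 < gfac μ j n := by
  apply inv_pos.mpr
  have h1 : (0:ℝ) ≤ |(n : ℝ)| ^ μ := Real.rpow_nonneg (abs_nonneg _) _
  have h2 : (0:ℝ) ≤ jwt j ^ μ := Real.rpow_nonneg (jwt_pos j).le _
  nlinarith

lemma gfac_zero (μ : ℝ) (hμ : 0 < μ) (j : ℤ) : gfac μ j 0 = 1 := by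
  simp [gfac, Real.zero_rpow (ne_of_gt hμ)]

lemma gfac_le (μ : ℝ) (j : ℤ) {n : ℤ} (hn : n ≠ 0) :
    gfac μ j n ≤ |(n : ℝ)| ^ (-μ) * jwt j ^ (-μ) := by
  have hna : (0:ℝ) < |(n : ℝ)| := by
    exact abs_pos.mpr (by exact_mod_cast hn)
  have h1 : (0:ℝ) < |(n : ℝ)| ^ μ := Real.rpow_pos_of_pos hna _
  have h2 : (0:ℝ) < jwt j ^ μ := Real.rpow_pos_of_pos (jwt_pos j) _
  have key : gfac μ j n ≤ (|(n : ℝ)| ^ μ * jwt j ^ μ)⁻¹ := by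
    apply inv_anti₀ (by positivity)
    linarith
  calc gfac μ j n ≤ (|(n : ℝ)| ^ μ * jwt j ^ μ)⁻¹ := key
    _ = |(n : ℝ)| ^ (-μ) * jwt j ^ (-μ) := by
        rw [mul_inv, Real.rpow_neg hna.le, Real.rpow_neg (jwt_pos j).le]

lemma summable_jwt (μ : ℝ) (hμ : 1 < μ) : Summable fun j : ℤ => jwt j ^ (-μ) := by
  have h1 : Summable fun j : ℤ => |(j : ℝ)| ^ (-μ) := Real.summable_abs_int_rpow hμ
  have h2 : Summable fun j : ℤ => (if j = 0 then (1:ℝ) else 0) :=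
    summable_of_ne_finset_zero (s := {0}) (by intro i hi; simp at hi; simp [hi])
  apply (h1.add h2).congr
  intro j
  by_cases hj : j = 0
  · subst hj
    simp [jwt, Real.zero_rpow (by linarith : -μ ≠ 0), Real.one_rpow]
  · have : jwt j = |(j : ℝ)| := by
      have : (1:ℝ) ≤ |(j:ℝ)| := by
        rw [← Int.cast_abs]; exact_mod_cast Int.one_le_abs hj
      simp [jwt, max_eq_right this]
    simp [hj, this]
def Kc (μ : ℝ) : ℝ := ∑' n : ℤ, |(n : ℝ)| ^ (-μ)
def Lc (μ : ℝ) : ℝ := ∑' j : ℤ, jwt j ^ (-μ)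

lemma Kc_nonneg (μ : ℝ) : 0 ≤ Kc μ :=
  tsum_nonneg fun n => Real.rpow_nonneg (abs_nonneg _) _

lemma gfac_sum_le (μ : ℝ) (hμ : 1 < μ) (j : ℤ) (t : Finset ℤ) :
    ∑ n ∈ t, gfac μ j n ≤ 1 + Kc μ * jwt j ^ (-μ) := by
  have hw : (0:ℝ) ≤ jwt j ^ (-μ) := Real.rpow_nonneg (jwt_pos j).le _
  have hb : ∀ n ∈ t, gfac μ j n ≤
      (if n = 0 then (1:ℝ) else 0) + |(n : ℝ)| ^ (-μ) * jwt j ^ (-μ) := by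
    intro n _
    by_cases hn : n = 0
    · subst hn
      have : |((0:ℤ) : ℝ)| ^ (-μ) = 0 := by
        simp [Real.zero_rpow (by linarith : -μ ≠ 0)]
      rw [gfac_zero μ (by linarith) j]
      simp only [Int.cast_zero, this]
      simp [Real.zero_rpow (by linarith : -μ ≠ 0)]
    · simpa [hn] using gfac_le μ j hn
  calc ∑ n ∈ t, gfac μ j n
      ≤ ∑ n ∈ t, ((if n = 0 then (1:ℝ) else 0) + |(n : ℝ)| ^ (-μ) * jwt j ^ (-μ)) :=
        Finset.sum_le_sum hb
    _ = (∑ n ∈ t, (if n = 0 then (1:ℝ) else 0))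
        + (∑ n ∈ t, |(n : ℝ)| ^ (-μ)) * jwt j ^ (-μ) := by
        rw [Finset.sum_add_distrib, Finset.sum_mul]
    _ ≤ 1 + Kc μ * jwt j ^ (-μ) := by
        gcongr
        · simp only [Finset.sum_ite_eq' t (0:ℤ) (fun _ => (1:ℝ))]
          split <;> norm_num
        · exact Summable.sum_le_tsum t (fun n _ => Real.rpow_nonneg (abs_nonneg _) _)
            (Real.summable_abs_int_rpow hμ)

/-- Any finite sum of the weights `cweight` is bounded by `exp (Kc * Lc)`. -/
lemma cweight_sum_le (μ : ℝ) (hμ : 1 < μ) (u : Finset (ℤ →₀ ℤ)) :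
    ∑ ℓ ∈ u, cweight μ ℓ ≤ Real.exp (Kc μ * Lc μ) := by
  classical
  set S : Finset ℤ := u.sup Finsupp.support with hS
  set N : ℕ := u.sup fun ℓ => ℓ.support.sup fun j => (ℓ j).natAbs with hN
  -- each ℓ ∈ u has support ⊆ S and coefficients bounded by N
  have hsupp : ∀ ℓ ∈ u, ℓ.support ⊆ S := fun ℓ hℓ => Finset.le_sup hℓ
  have hcoef : ∀ ℓ ∈ u, ∀ j, ℓ j ∈ Finset.Icc (-(N:ℤ)) (N:ℤ) := by
    intro ℓ hℓ j
    by_cases hj : ℓ j = 0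
    · simp [hj]
    · have h1 : (ℓ j).natAbs ≤ N := by
        refine le_trans ?_ (Finset.le_sup (f := fun ℓ => ℓ.support.sup fun j => (ℓ j).natAbs) hℓ)
        exact Finset.le_sup (f := fun j => (ℓ j).natAbs) (Finsupp.mem_support_iff.mpr hj)
      simp only [Finset.mem_Icc]
      omega
  -- rewrite cweight as a product over S
  have hcw : ∀ ℓ ∈ u, cweight μ ℓ = ∏ j ∈ S, gfac μ j (ℓ j) := by
    intro ℓ hℓ
    refine Finset.prod_subset (hsupp ℓ hℓ) ?_
    intro j _ hj
    rw [Finsupp.notMem_support_iff.mp hj, gfac_zero μ (by linarith)]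
  -- injection into S.pi
  set emb : (ℤ →₀ ℤ) → (∀ j ∈ S, ℤ) := fun ℓ => fun j _ => ℓ j with hemb
  have hinj : ∀ ℓ₁ ∈ u, ∀ ℓ₂ ∈ u, emb ℓ₁ = emb ℓ₂ → ℓ₁ = ℓ₂ := by
    intro ℓ₁ h₁ ℓ₂ h₂ h
    ext j
    by_cases hj : j ∈ S
    · exact congrFun (congrFun h j) hj
    · rw [Finsupp.notMem_support_iff.mp fun hc => hj (hsupp ℓ₁ h₁ hc),
        Finsupp.notMem_support_iff.mp fun hc => hj (hsupp ℓ₂ h₂ hc)]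
  have hmem : ∀ ℓ ∈ u, emb ℓ ∈ S.pi fun _ => Finset.Icc (-(N:ℤ)) (N:ℤ) := by
    intro ℓ hℓ
    rw [Finset.mem_pi]
    intro j _
    exact hcoef ℓ hℓ j
  have step1 : ∑ ℓ ∈ u, cweight μ ℓ
      = ∑ p ∈ u.image emb, ∏ x ∈ S.attach, gfac μ x.1 (p x.1 x.2) := by
    rw [Finset.sum_image hinj]
    refine Finset.sum_congr rfl fun ℓ hℓ => ?_
    rw [hcw ℓ hℓ]
    rw [← Finset.prod_attach S (fun j => gfac μ j (ℓ j))]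
  have step2 : ∑ p ∈ u.image emb, ∏ x ∈ S.attach, gfac μ x.1 (p x.1 x.2)
      ≤ ∑ p ∈ S.pi (fun _ => Finset.Icc (-(N:ℤ)) (N:ℤ)),
          ∏ x ∈ S.attach, gfac μ x.1 (p x.1 x.2) := by
    apply Finset.sum_le_sum_of_subset_of_nonneg
    · intro p hp
      obtain ⟨ℓ, hℓ, rfl⟩ := Finset.mem_image.mp hp
      exact hmem ℓ hℓ
    · intro p _ _
      exact Finset.prod_nonneg fun x _ => (gfac_pos μ x.1 _).le
  have step3 : ∑ p ∈ S.pi (fun _ => Finset.Icc (-(N:ℤ)) (N:ℤ)),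
          ∏ x ∈ S.attach, gfac μ x.1 (p x.1 x.2)
      = ∏ j ∈ S, ∑ n ∈ Finset.Icc (-(N:ℤ)) (N:ℤ), gfac μ j n :=
    (Finset.prod_sum S (fun _ => Finset.Icc (-(N:ℤ)) (N:ℤ)) (fun j n => gfac μ j n)).symm
  have step4 : ∏ j ∈ S, ∑ n ∈ Finset.Icc (-(N:ℤ)) (N:ℤ), gfac μ j n
      ≤ Real.exp (Kc μ * Lc μ) := by
    calc ∏ j ∈ S, ∑ n ∈ Finset.Icc (-(N:ℤ)) (N:ℤ), gfac μ j n
        ≤ ∏ j ∈ S, Real.exp (Kc μ * jwt j ^ (-μ)) := by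
          apply Finset.prod_le_prod
          · intro j _
            exact Finset.sum_nonneg fun n _ => (gfac_pos μ j n).le
          · intro j _
            calc ∑ n ∈ Finset.Icc (-(N:ℤ)) (N:ℤ), gfac μ j n
                ≤ 1 + Kc μ * jwt j ^ (-μ) := gfac_sum_le μ hμ j _
              _ ≤ Real.exp (Kc μ * jwt j ^ (-μ)) := by
                  have := Real.add_one_le_exp (Kc μ * jwt j ^ (-μ))
                  linarith
      _ = Real.exp (∑ j ∈ S, Kc μ * jwt j ^ (-μ)) := (Real.exp_sum S _).symm
      _ ≤ Real.exp (Kc μ * Lc μ) := by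
          apply Real.exp_le_exp.mpr
          rw [← Finset.mul_sum]
          apply mul_le_mul_of_nonneg_left _ (Kc_nonneg μ)
          exact Summable.sum_le_tsum S (fun j _ => Real.rpow_nonneg (jwt_pos j).le _)
            (summable_jwt μ hμ)
  calc ∑ ℓ ∈ u, cweight μ ℓ ≤ _ := le_of_eq step1
    _ ≤ _ := step2
    _ ≤ _ := le_of_eq step3
    _ ≤ _ := step4
lemma vol_abs_le {d c r : ℝ} (hd : 1 ≤ |d|) (hr : 0 ≤ r) :
    MeasureTheory.volume {x : ℝ | |x * d + c| ≤ r} ≤ ENNReal.ofReal (2 * r) := by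
  have hd0 : d ≠ 0 := by
    intro h; rw [h, abs_zero] at hd; linarith
  set a := (-r - c)/d with ha'
  set b := (r - c)/d with hb'
  have hsub : {x : ℝ | |x * d + c| ≤ r} ⊆ Set.Icc (min a b) (max a b) := by
    intro x hx
    simp only [Set.mem_setOf_eq, abs_le] at hx
    rcases lt_or_gt_of_ne hd0 with hneg | hpos
    · have ha : x ≤ a := by rw [ha', le_div_iff_of_neg hneg]; linarith
      have hb : b ≤ x := by rw [hb', div_le_iff_of_neg hneg]; linarith
      exact ⟨le_trans (min_le_right _ _) hb, le_trans ha (le_max_left _ _)⟩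
    · have ha : a ≤ x := by rw [ha', div_le_iff₀ hpos]; linarith
      have hb : x ≤ b := by rw [hb', le_div_iff₀ hpos]; linarith
      exact ⟨le_trans (min_le_left _ _) ha, le_trans hb (le_max_right _ _)⟩
  calc MeasureTheory.volume {x : ℝ | |x * d + c| ≤ r}
      ≤ MeasureTheory.volume (Set.Icc (min a b) (max a b)) := measure_mono hsub
    _ = ENNReal.ofReal (max a b - min a b) := Real.volume_Icc
    _ ≤ ENNReal.ofReal (2 * r) := by
        apply ENNReal.ofReal_le_ofReal
        rw [max_sub_min_eq_abs]
        have h1 : b - a = (2*r)/d := by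
          rw [ha', hb']; field_simp; ring
        rw [h1, abs_div, abs_of_nonneg (by positivity : (0:ℝ) ≤ 2*r)]
        exact div_le_self (by positivity) hd

lemma meas_abs_set (d c r : ℝ) : MeasurableSet {x : ℝ | |x * d + c| ≤ r} := by
  have : {x : ℝ | |x * d + c| ≤ r} = (fun x : ℝ => x * d + c) ⁻¹' (Set.Icc (-r) r) := by
    ext x; simp [abs_le]
  rw [this]
  exact ((measurable_id.mul_const d).add_const c) measurableSet_Icc
lemma good_compl_null
    (P : MeasureTheory.Measure (ℤ → ℝ)) [MeasureTheory.IsProbabilityMeasure P]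
    (hP : ∀ (s : Finset ℤ) (A : ℤ → Set ℝ), (∀ j ∈ s, MeasurableSet (A j)) →
      P (Set.pi (↑s : Set ℤ) A) =
        ∏ j ∈ s, MeasureTheory.volume (A j ∩ Set.Icc (1 : ℝ) 2)) :
    P {ω : ℤ → ℝ | ∀ j : ℤ, ω j ∈ Set.Ico (1:ℝ) 2}ᶜ = 0 := by
  have hsub : {ω : ℤ → ℝ | ∀ j : ℤ, ω j ∈ Set.Ico (1:ℝ) 2}ᶜ
      ⊆ ⋃ j : ℤ, {ω : ℤ → ℝ | ω j ∈ Set.Ico (1:ℝ) 2}ᶜ := by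
    intro ω hω
    simp only [Set.mem_compl_iff, Set.mem_setOf_eq, not_forall] at hω
    obtain ⟨j, hj⟩ := hω
    exact Set.mem_iUnion.mpr ⟨j, hj⟩
  refine measure_mono_null hsub (measure_iUnion_null fun j => ?_)
  have hmeas : MeasurableSet {ω : ℤ → ℝ | ω j ∈ Set.Ico (1:ℝ) 2} :=
    measurable_pi_apply j measurableSet_Ico
  rw [prob_compl_eq_zero_iff hmeas]
  have key : {ω : ℤ → ℝ | ω j ∈ Set.Ico (1:ℝ) 2}
      = Set.pi (↑({j} : Finset ℤ)) (fun _ => Set.Ico (1:ℝ) 2) := by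
    ext ω
    simp [Set.mem_pi]
  rw [key, hP {j} _ (fun _ _ => measurableSet_Ico), Finset.prod_singleton,
    Set.inter_eq_left.mpr Set.Ico_subset_Icc_self, Real.volume_Ico]
  norm_num
lemma small_dot_bound
    (P : MeasureTheory.Measure (ℤ → ℝ)) [MeasureTheory.IsProbabilityMeasure P]
    (hP : ∀ (s : Finset ℤ) (A : ℤ → Set ℝ), (∀ j ∈ s, MeasurableSet (A j)) →
      P (Set.pi (↑s : Set ℤ) A) =
        ∏ j ∈ s, MeasureTheory.volume (A j ∩ Set.Icc (1 : ℝ) 2))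
    (ℓ : ℤ →₀ ℤ) (hℓ : ℓ ≠ 0) {ε : ℝ} (hε : 0 < ε) :
    P {ω : ℤ → ℝ | |omegaDot ω ℓ| ≤ ε} ≤ ENNReal.ofReal (4 * ε) := by
  classical
  -- setup
  obtain ⟨j₀, hj₀⟩ := Finsupp.support_nonempty_iff.mpr hℓ
  set S : Finset ℤ := ℓ.support with hS
  set T : Finset ℤ := S.erase j₀ with hT
  set d : ℝ := (ℓ j₀ : ℝ) with hd'
  have hd : 1 ≤ |d| := by
    rw [hd', ← Int.cast_abs]
    exact_mod_cast Int.one_le_abs (Finsupp.mem_support_iff.mp hj₀)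
  set Sig : ℝ := ∑ j ∈ T, |(ℓ j : ℝ)| with hSig
  have hSig0 : 0 ≤ Sig := Finset.sum_nonneg fun j _ => abs_nonneg _
  obtain ⟨m₀, hm₀⟩ := exists_nat_ge (Sig / ε)
  set m : ℕ := m₀ + 1 with hm'
  have hm0 : (0:ℝ) < m := by positivity
  have hmε : Sig ≤ m * ε := by
    have h1 : Sig ≤ m₀ * ε := by
      rw [div_le_iff₀ hε] at hm₀; exact hm₀
    have : (m₀:ℝ) * ε ≤ m * ε := by
      apply mul_le_mul_of_nonneg_right _ hε.le
      exact_mod_cast Nat.le_succ m₀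
    linarith
  -- cylinder data indexed by p ∈ T.pi (range m)
  set cp : (∀ j ∈ T, ℕ) → ℝ :=
    fun p => ∑ x ∈ T.attach, (1 + (p x.1 x.2 : ℝ) / m) * (ℓ x.1 : ℝ) with hcp
  set A : (∀ j ∈ T, ℕ) → ℤ → Set ℝ := fun p j =>
    if h : j ∈ T then
      Set.Ico (1 + (p j h : ℝ) / m) (1 + ((p j h : ℝ) + 1) / m)
    else {x : ℝ | |x * d + cp p| ≤ 2 * ε} with hA
  have hAmeas : ∀ p, ∀ j, MeasurableSet (A p j) := by
    intro p j
    rw [hA]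
    dsimp only
    split
    · exact measurableSet_Ico
    · exact meas_abs_set d (cp p) (2*ε)
  -- inclusion step
  have hsub : {ω : ℤ → ℝ | |omegaDot ω ℓ| ≤ ε}
      ∩ {ω : ℤ → ℝ | ∀ j : ℤ, ω j ∈ Set.Ico (1:ℝ) 2}
      ⊆ ⋃ p ∈ T.pi (fun _ => Finset.range m), Set.pi (↑S : Set ℤ) (A p) := by
    rintro ω ⟨h1, h2⟩
    simp only [Set.mem_setOf_eq] at h1 h2
    set p : ∀ j ∈ T, ℕ := fun j _ => (⌊(ω j - 1) * m⌋).toNat with hp'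
    -- basic cell bounds for j ∈ T
    have hcell : ∀ j (h : j ∈ T),
        1 + ((p j h : ℝ)) / m ≤ ω j ∧ ω j < 1 + ((p j h : ℝ) + 1) / m := by
      intro j h
      have hge : (1:ℝ) ≤ ω j := (h2 j).1
      have hlt : ω j < 2 := (h2 j).2
      have hnn : (0:ℝ) ≤ (ω j - 1) * m := by nlinarith
      have hfl0 : (0:ℤ) ≤ ⌊(ω j - 1) * m⌋ := Int.floor_nonneg.mpr hnn
      have hcast : ((p j h : ℝ)) = (⌊(ω j - 1) * m⌋ : ℝ) := by
        rw [hp']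
        exact_mod_cast congrArg (Int.cast : ℤ → ℝ) (Int.toNat_of_nonneg hfl0)
      have hfle : (⌊(ω j - 1) * m⌋ : ℝ) ≤ (ω j - 1) * m := Int.floor_le _
      have hflt : (ω j - 1) * m < (⌊(ω j - 1) * m⌋ : ℝ) + 1 := Int.lt_floor_add_one _
      constructor
      · rw [hcast]
        have : (⌊(ω j - 1) * m⌋ : ℝ) / m ≤ ω j - 1 := by
          rw [div_le_iff₀ hm0]; linarith
        linarith
      · rw [hcast]
        have : ω j - 1 < ((⌊(ω j - 1) * m⌋ : ℝ) + 1) / m := by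
          rw [lt_div_iff₀ hm0]; linarith
        linarith
    have hpmem : p ∈ T.pi (fun _ => Finset.range m) := by
      rw [Finset.mem_pi]
      intro j h
      rw [Finset.mem_range]
      have hlt : ω j < 2 := (h2 j).2
      have hfl : ⌊(ω j - 1) * m⌋ < (m : ℤ) := by
        apply Int.floor_lt.mpr
        push_cast
        nlinarith
      show (⌊(ω j - 1) * (m:ℝ)⌋).toNat < m
      omega
    refine Set.mem_biUnion hpmem ?_
    intro j hj
    rw [hA]
    dsimp only
    by_cases h : j ∈ T
    · rw [dif_pos h]
      exact ⟨(hcell j h).1, (hcell j h).2⟩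
    · -- j = j₀
      have hj0 : j = j₀ := by
        by_contra hne
        exact h (Finset.mem_erase.mpr ⟨hne, hj⟩)
      rw [dif_neg h]
      simp only [Set.mem_setOf_eq]
      rw [hj0]
      -- the key estimate
      have hdot : omegaDot ω ℓ = ω j₀ * d + ∑ x ∈ T.attach, ω x.1 * (ℓ x.1 : ℝ) := by
        rw [omegaDot, ← Finset.add_sum_erase _ _ hj₀, Finset.sum_attach T (fun i => ω i * (ℓ i : ℝ))]
      have hsplit : ω j₀ * d + cp p
          = omegaDot ω ℓ - ∑ x ∈ T.attach, (ω x.1 - (1 + (p x.1 x.2 : ℝ) / m)) * (ℓ x.1 : ℝ) := by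
        rw [hdot, hcp]
        dsimp only
        rw [add_sub_assoc, ← Finset.sum_sub_distrib]
        congr 1
        apply Finset.sum_congr rfl
        intro x _
        ring
      rw [hsplit]
      have hterm : ∀ x ∈ T.attach,
          |(ω x.1 - (1 + (p x.1 x.2 : ℝ) / m)) * (ℓ x.1 : ℝ)| ≤ (1/m) * |(ℓ x.1 : ℝ)| := by
        intro x _
        rw [abs_mul]
        apply mul_le_mul_of_nonneg_right _ (abs_nonneg _)
        have hc := hcell x.1 x.2
        rw [abs_le]
        constructor
        · have : (0:ℝ) < 1/m := by positivity
          linarith [hc.1]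
        · have h1m : ((p x.1 x.2 : ℝ) + 1) / m = (p x.1 x.2 : ℝ)/m + 1/m := by ring
          have := hc.2
          rw [h1m] at this
          linarith
      have hsum2 : |∑ x ∈ T.attach, (ω x.1 - (1 + (p x.1 x.2 : ℝ) / m)) * (ℓ x.1 : ℝ)| ≤ ε := by
        calc |∑ x ∈ T.attach, (ω x.1 - (1 + (p x.1 x.2 : ℝ) / m)) * (ℓ x.1 : ℝ)|
            ≤ ∑ x ∈ T.attach, |(ω x.1 - (1 + (p x.1 x.2 : ℝ) / m)) * (ℓ x.1 : ℝ)| :=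
              Finset.abs_sum_le_sum_abs _ _
          _ ≤ ∑ x ∈ T.attach, (1/m) * |(ℓ x.1 : ℝ)| := Finset.sum_le_sum hterm
          _ = (1/m) * Sig := by
              rw [← Finset.mul_sum, hSig, Finset.sum_attach T (fun i => |(ℓ i : ℝ)|)]
          _ ≤ ε := by
              rw [div_mul_eq_mul_div, one_mul, div_le_iff₀ hm0]
              linarith [hmε]
      calc |omegaDot ω ℓ - ∑ x ∈ T.attach, (ω x.1 - (1 + (p x.1 x.2 : ℝ) / m)) * (ℓ x.1 : ℝ)|
          ≤ |omegaDot ω ℓ| + |∑ x ∈ T.attach, (ω x.1 - (1 + (p x.1 x.2 : ℝ) / m)) * (ℓ x.1 : ℝ)| :=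
            abs_sub _ _
        _ ≤ 2 * ε := by linarith
  -- measure of each cylinder
  have hcyl : ∀ p ∈ T.pi (fun _ => Finset.range m),
      P (Set.pi (↑S : Set ℤ) (A p))
        ≤ ENNReal.ofReal (4 * ε) * ENNReal.ofReal ((1:ℝ)/m) ^ T.card := by
    intro p hp
    rw [hP S (A p) (fun j _ => hAmeas p j)]
    rw [← Finset.mul_prod_erase S _ hj₀, ← hT]
    have hj₀T : j₀ ∉ T := Finset.notMem_erase _ _
    have hfac0 : MeasureTheory.volume (A p j₀ ∩ Set.Icc (1:ℝ) 2) ≤ ENNReal.ofReal (4 * ε) := by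
      calc MeasureTheory.volume (A p j₀ ∩ Set.Icc (1:ℝ) 2)
          ≤ MeasureTheory.volume (A p j₀) := measure_mono Set.inter_subset_left
        _ ≤ ENNReal.ofReal (4 * ε) := by
            rw [hA]; dsimp only
            rw [dif_neg hj₀T]
            have := vol_abs_le (c := cp p) hd (by positivity : (0:ℝ) ≤ 2*ε)
            calc MeasureTheory.volume {x : ℝ | |x * d + cp p| ≤ 2*ε}
                ≤ ENNReal.ofReal (2 * (2*ε)) := this
              _ = ENNReal.ofReal (4 * ε) := by ring_nf
    have hfacT : ∀ j ∈ T, MeasureTheory.volume (A p j ∩ Set.Icc (1:ℝ) 2)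
        = ENNReal.ofReal ((1:ℝ)/m) := by
      intro j hjT
      have hpj : p j hjT < m := by
        have := Finset.mem_pi.mp hp j hjT
        rwa [Finset.mem_range] at this
      rw [hA]; dsimp only
      rw [dif_pos hjT]
      have hsub2 : Set.Ico (1 + (p j hjT : ℝ)/m) (1 + ((p j hjT : ℝ)+1)/m) ⊆ Set.Icc (1:ℝ) 2 := by
        intro x hx
        obtain ⟨hx1, hx2⟩ := hx
        constructor
        · have : (0:ℝ) ≤ (p j hjT : ℝ)/m := by positivity
          linarith
        · have hb : ((p j hjT : ℝ)+1)/m ≤ 1 := by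
            rw [div_le_one hm0]
            exact_mod_cast Nat.succ_le_of_lt hpj
          linarith
      rw [Set.inter_eq_left.mpr hsub2, Real.volume_Ico]
      congr 1
      field_simp
      ring
    calc MeasureTheory.volume (A p j₀ ∩ Set.Icc (1:ℝ) 2)
          * ∏ j ∈ T, MeasureTheory.volume (A p j ∩ Set.Icc (1:ℝ) 2)
        ≤ ENNReal.ofReal (4 * ε) * ∏ j ∈ T, ENNReal.ofReal ((1:ℝ)/m) := by
          apply mul_le_mul' hfac0
          apply le_of_eq
          exact Finset.prod_congr rfl hfacT
      _ = ENNReal.ofReal (4 * ε) * ENNReal.ofReal ((1:ℝ)/m) ^ T.card := by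
          rw [Finset.prod_const]
  -- put it together
  have hcard : (T.pi (fun _ => Finset.range m)).card = m ^ T.card := by
    rw [Finset.card_pi]
    simp [Finset.prod_const]
  calc P {ω : ℤ → ℝ | |omegaDot ω ℓ| ≤ ε}
      ≤ P (({ω : ℤ → ℝ | |omegaDot ω ℓ| ≤ ε}
          ∩ {ω : ℤ → ℝ | ∀ j : ℤ, ω j ∈ Set.Ico (1:ℝ) 2})
          ∪ {ω : ℤ → ℝ | ∀ j : ℤ, ω j ∈ Set.Ico (1:ℝ) 2}ᶜ) := by
        apply measure_mono
        intro ω hω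
        by_cases hg : ω ∈ {ω : ℤ → ℝ | ∀ j : ℤ, ω j ∈ Set.Ico (1:ℝ) 2}
        · exact Or.inl ⟨hω, hg⟩
        · exact Or.inr hg
    _ ≤ P ({ω : ℤ → ℝ | |omegaDot ω ℓ| ≤ ε}
          ∩ {ω : ℤ → ℝ | ∀ j : ℤ, ω j ∈ Set.Ico (1:ℝ) 2})
        + P {ω : ℤ → ℝ | ∀ j : ℤ, ω j ∈ Set.Ico (1:ℝ) 2}ᶜ := measure_union_le _ _
    _ = P ({ω : ℤ → ℝ | |omegaDot ω ℓ| ≤ ε}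
          ∩ {ω : ℤ → ℝ | ∀ j : ℤ, ω j ∈ Set.Ico (1:ℝ) 2}) := by
        rw [good_compl_null P hP, add_zero]
    _ ≤ P (⋃ p ∈ T.pi (fun _ => Finset.range m), Set.pi (↑S : Set ℤ) (A p)) :=
        measure_mono hsub
    _ ≤ ∑ p ∈ T.pi (fun _ => Finset.range m), P (Set.pi (↑S : Set ℤ) (A p)) :=
        measure_biUnion_finset_le _ _
    _ ≤ ∑ p ∈ T.pi (fun _ => Finset.range m),
          ENNReal.ofReal (4 * ε) * ENNReal.ofReal ((1:ℝ)/m) ^ T.card :=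
        Finset.sum_le_sum hcyl
    _ = (m : ℝ≥0∞) ^ T.card * (ENNReal.ofReal (4 * ε) * ENNReal.ofReal ((1:ℝ)/m) ^ T.card) := by
        rw [Finset.sum_const, hcard, nsmul_eq_mul]
        push_cast
        ring
    _ = ENNReal.ofReal (4 * ε) * ((m : ℝ≥0∞) * ENNReal.ofReal ((1:ℝ)/m)) ^ T.card := by
        rw [mul_pow]; ring
    _ = ENNReal.ofReal (4 * ε) := by
        have : (m : ℝ≥0∞) * ENNReal.ofReal ((1:ℝ)/m) = 1 := by
          rw [← ENNReal.ofReal_natCast m, ← ENNReal.ofReal_mul (by positivity)]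
          rw [mul_one_div, div_self (ne_of_gt hm0)]
          exact ENNReal.ofReal_one
        rw [this, one_pow, mul_one]

/-- **Universality of the Diophantine condition**: if `P` is the product over `j ∈ ℤ` of
uniform distributions on `[1,2]` (characterized on cylinder sets), then there is a
constant `C > 0` depending only on `μ` with
`P(not Diophantine with parameters γ,μ) ≤ Cγ` for each `γ ∈ (0,1)`; consequently
`P`-almost every `ω` is Diophantine with parameters `γ, μ` for some `γ ∈ (0,1)`. -/
theorem diophantine_full_measure
    (μ : ℝ) (hμ : 1 < μ)
    (P : MeasureTheory.Measure (ℤ → ℝ)) [MeasureTheory.IsProbabilityMeasure P]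
    (hP : ∀ (s : Finset ℤ) (A : ℤ → Set ℝ), (∀ j ∈ s, MeasurableSet (A j)) →
      P (Set.pi (↑s : Set ℤ) A) =
        ∏ j ∈ s, MeasureTheory.volume (A j ∩ Set.Icc (1 : ℝ) 2)) :
    ∃ C : ℝ, 0 < C ∧
      (∀ γ ∈ Set.Ioo (0 : ℝ) 1,
        P {ω : ℤ → ℝ | ¬ IsDiophantine γ μ ω} ≤ ENNReal.ofReal (C * γ)) ∧
      P {ω : ℤ → ℝ | ¬ ∃ γ ∈ Set.Ioo (0 : ℝ) 1, IsDiophantine γ μ ω} = 0 := by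
  classical
  set C : ℝ := 4 * Real.exp (Kc μ * Lc μ) with hC
  have hC0 : 0 < C := by positivity
  have hc0 : ∀ ℓ : ℤ →₀ ℤ, 0 < cweight μ ℓ :=
    fun ℓ => Finset.prod_pos fun j _ => gfac_pos μ j _
  have htsum : ∑' ℓ : ℤ →₀ ℤ, ENNReal.ofReal (cweight μ ℓ)
      ≤ ENNReal.ofReal (Real.exp (Kc μ * Lc μ)) := by
    rw [ENNReal.tsum_eq_iSup_sum]
    apply iSup_le
    intro u
    rw [← ENNReal.ofReal_sum_of_nonneg (fun ℓ _ => (hc0 ℓ).le)]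
    exact ENNReal.ofReal_le_ofReal (cweight_sum_le μ hμ u)
  have main : ∀ γ ∈ Set.Ioo (0:ℝ) 1,
      P {ω : ℤ → ℝ | ¬ IsDiophantine γ μ ω} ≤ ENNReal.ofReal (C * γ) := by
    intro γ hγ
    obtain ⟨hγ0, hγ1⟩ := hγ
    have hsub : {ω : ℤ → ℝ | ¬ IsDiophantine γ μ ω}
        ⊆ ⋃ ℓ : ℤ →₀ ℤ, {ω : ℤ → ℝ | ℓ ≠ 0 ∧ |omegaDot ω ℓ| ≤ γ * cweight μ ℓ} := by
      intro ω hω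
      simp only [Set.mem_setOf_eq] at hω
      rw [IsDiophantine] at hω
      push_neg at hω
      obtain ⟨ℓ, hℓ0, hle⟩ := hω
      exact Set.mem_iUnion.mpr ⟨ℓ, hℓ0, hle⟩
    have hbound : ∀ ℓ : ℤ →₀ ℤ,
        P {ω : ℤ → ℝ | ℓ ≠ 0 ∧ |omegaDot ω ℓ| ≤ γ * cweight μ ℓ}
          ≤ ENNReal.ofReal (4 * γ * cweight μ ℓ) := by
      intro ℓ
      by_cases hℓ : ℓ = 0
      · have : {ω : ℤ → ℝ | ℓ ≠ 0 ∧ |omegaDot ω ℓ| ≤ γ * cweight μ ℓ} = ∅ := by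
          ext ω; simp [hℓ]
        rw [this, measure_empty]
        exact zero_le
      · have hεpos : 0 < γ * cweight μ ℓ := mul_pos hγ0 (hc0 ℓ)
        refine le_trans (le_trans (measure_mono fun ω hω => hω.2)
          (small_dot_bound P hP ℓ hℓ hεpos)) ?_
        apply ENNReal.ofReal_le_ofReal
        rw [mul_assoc]
    calc P {ω : ℤ → ℝ | ¬ IsDiophantine γ μ ω}
        ≤ P (⋃ ℓ : ℤ →₀ ℤ, {ω : ℤ → ℝ | ℓ ≠ 0 ∧ |omegaDot ω ℓ| ≤ γ * cweight μ ℓ}) :=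
          measure_mono hsub
      _ ≤ ∑' ℓ : ℤ →₀ ℤ, P {ω : ℤ → ℝ | ℓ ≠ 0 ∧ |omegaDot ω ℓ| ≤ γ * cweight μ ℓ} :=
          measure_iUnion_le _
      _ ≤ ∑' ℓ : ℤ →₀ ℤ, ENNReal.ofReal (4 * γ * cweight μ ℓ) :=
          ENNReal.tsum_le_tsum hbound
      _ = ENNReal.ofReal (4 * γ) * ∑' ℓ : ℤ →₀ ℤ, ENNReal.ofReal (cweight μ ℓ) := by
          rw [← ENNReal.tsum_mul_left]
          congr 1
          funext ℓ
          rw [← ENNReal.ofReal_mul (by positivity)]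
      _ ≤ ENNReal.ofReal (4 * γ) * ENNReal.ofReal (Real.exp (Kc μ * Lc μ)) :=
          mul_le_mul' le_rfl htsum
      _ = ENNReal.ofReal (C * γ) := by
          rw [← ENNReal.ofReal_mul (by positivity), hC]
          ring_nf
  refine ⟨C, hC0, main, ?_⟩
  have hmono : ∀ n : ℕ,
      P {ω : ℤ → ℝ | ¬ ∃ γ ∈ Set.Ioo (0 : ℝ) 1, IsDiophantine γ μ ω}
        ≤ ENNReal.ofReal (C * (1/((n:ℝ)+2))) := by
    intro n
    have hγ : (1:ℝ)/((n:ℝ)+2) ∈ Set.Ioo (0:ℝ) 1 := by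
      constructor
      · positivity
      · rw [div_lt_one (by positivity)]
        have : (0:ℝ) ≤ (n:ℝ) := Nat.cast_nonneg n
        linarith
    refine le_trans (measure_mono ?_) (main _ hγ)
    intro ω hω
    simp only [Set.mem_setOf_eq] at hω ⊢
    intro hdio
    exact hω ⟨_, hγ, hdio⟩
  have hreal : Filter.Tendsto (fun n : ℕ => C * (1/((n:ℝ)+2))) Filter.atTop (nhds 0) := by
    have h1 : Filter.Tendsto (fun n : ℕ => 1/((n:ℝ)+2)) Filter.atTop (nhds 0) := by
      have := (tendsto_one_div_add_atTop_nhds_zero_nat (𝕜 := ℝ)).comp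
        (Filter.tendsto_add_atTop_nat 1)
      apply this.congr
      intro n
      simp only [Function.comp_apply]
      push_cast
      ring_nf
    have := h1.const_mul C
    simpa using this
  have hlim : Filter.Tendsto (fun n : ℕ => ENNReal.ofReal (C * (1/((n:ℝ)+2))))
      Filter.atTop (nhds 0) := by
    have := (ENNReal.continuous_ofReal.tendsto 0).comp hreal
    simpa [Function.comp_def] using this
  exact le_antisymm (ge_of_tendsto hlim (Filter.Eventually.of_forall hmono)) zero_le
end
end

section
/- Let μ > 1, η ≥ 2, γ ∈ (0,1), and let ω ∈ ℝ^ℤ be infinite-dimensional Diophantine with parameters γ, μ. Then ω satisfies the infinite-dimensional weak Diophantine condition: there exist a continuous strictly decreasing function E : (0,∞) → (0,∞) and positive sequences (δ_m)_{m∈ℕ}, (ρ_m)_{m∈ℕ} with Σ_{m=0}^∞ δ_m < ∞, Σ_{m=0}^∞ ρ_m < ∞ and E(ρ_m) ≤ exp(2^m δ_m) for all m, such that for every σ > 0, every ρ ∈ (0,1), and every g : ℤ_*^∞ → ℂ with g(0) = 0: Σ_{0≠ℓ∈ℤ_*^∞} (|g(ℓ)|/|ω·ℓ|) e^{σ|ℓ|_η}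 ≤ E(ρ) · Σ_{ℓ∈ℤ_*^∞} |g(ℓ)| e^{(σ+ρ)|ℓ|_η}. That is, the weak Diophantine condition covers the classical infinite-dimensional Diophantine case. -/
open scoped BigOperators ENNReal

noncomputable section

/-- `|ℓ|_η = Σ_{j} ⟨j⟩^η |ℓ_j|` (a finite sum over the support of `ℓ`). -/
def etaNorm (η : ℝ) (ℓ : ℤ →₀ ℤ) : ℝ := ∑ j ∈ ℓ.support, jwt j ^ η * |(ℓ j : ℝ)|

namespace WDAux

/-- The threshold for "small" sites. -/
def Kc (μ ρ : ℝ) : ℝ := 2 * (μ + Real.log 2) / ρ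

/-- The per-factor constant for small sites. -/
def Dc (μ ρ : ℝ) : ℝ := 2 * Kc μ ρ ^ μ * (μ / ρ) ^ μ

/-- The constant in the control function `E ρ = exp (Ac μ / ρ²) / γ`. -/
def Ac (μ : ℝ) : ℝ :=
  4 * (2 * (μ + Real.log 2)) * (Real.log 2 + μ * (2 * (μ + Real.log 2)) + μ ^ 2)

lemma log2_pos : (0:ℝ) < Real.log 2 := Real.log_pos (by norm_num)

lemma Kc_big (μ ρ : ℝ) (hμ : 1 < μ) (hρ : 0 < ρ) (hρ1 : ρ < 1) : 2 < Kc μ ρ := by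
  have h2 := log2_pos
  rw [Kc, lt_div_iff₀ hρ]
  nlinarith

lemma Ac_pos (μ : ℝ) (hμ : 1 < μ) : 0 < Ac μ := by
  have h2 := log2_pos
  rw [Ac]; positivity

lemma one_le_rpow' {x : ℝ} (h : 1 ≤ x) {p : ℝ} (hp : 0 ≤ p) : 1 ≤ x ^ p := by
  rw [← Real.rpow_zero x]
  exact Real.rpow_le_rpow_of_exponent_le h hp

lemma Dc_one_le (μ ρ : ℝ) (hμ : 1 < μ) (hρ : 0 < ρ) (hρ1 : ρ < 1) : 1 ≤ Dc μ ρ := by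
  have hK := Kc_big μ ρ hμ hρ hρ1
  have h1 : 1 ≤ Kc μ ρ ^ μ := one_le_rpow' (by linarith) (by linarith)
  have h2 : 1 ≤ (μ / ρ) ^ μ := one_le_rpow' (by rw [le_div_iff₀ hρ]; linarith) (by linarith)
  rw [Dc]; nlinarith

/-- Key per-factor bound. -/
lemma factor_bound (μ η ρ : ℝ) (hμ : 1 < μ) (hη : 2 ≤ η) (hρ : 0 < ρ) (hρ1 : ρ < 1)
    (n k : ℝ) (hn : 1 ≤ n) (hk : 1 ≤ k) :
    1 + n ^ μ * k ^ μ ≤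
      (if k < Kc μ ρ then Dc μ ρ else 1) * Real.exp (ρ * (k ^ η * n)) := by
  have hμ0 : (0:ℝ) < μ := by linarith
  have hn0 : (0:ℝ) < n := by linarith
  have hk0 : (0:ℝ) < k := by linarith
  have hn1 : 1 ≤ n ^ μ := one_le_rpow' hn hμ0.le
  have hk1 : 1 ≤ k ^ μ := one_le_rpow' hk hμ0.le
  have hkη : 1 ≤ k ^ η := one_le_rpow' hk (by linarith)
  have h2 : 1 + n ^ μ * k ^ μ ≤ 2 * (n ^ μ * k ^ μ) := by nlinarith
  by_cases hcase : k < Kc μ ρ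
  · rw [if_pos hcase]
    have hKpos : 0 < Kc μ ρ := by linarith [Kc_big μ ρ hμ hρ hρ1]
    have hkK : k ^ μ ≤ Kc μ ρ ^ μ := Real.rpow_le_rpow hk0.le hcase.le hμ0.le
    have hlog : Real.log n ≤ ρ / μ * n + Real.log (μ / ρ) := by
      have ht : (0:ℝ) < ρ / μ := by positivity
      have h1 := Real.log_le_sub_one_of_pos (mul_pos ht hn0)
      have hsplit : Real.log (ρ / μ * n) = Real.log (ρ / μ) + Real.log n :=
        Real.log_mul (ne_of_gt ht) (ne_of_gt hn0)
      have hinv : Real.log (μ / ρ) = - Real.log (ρ / μ) := by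
        rw [← Real.log_inv]; congr 1; field_simp
      rw [hsplit] at h1
      linarith [hinv]
    have hnμ : n ^ μ ≤ (μ / ρ) ^ μ * Real.exp (ρ * n) := by
      rw [Real.rpow_def_of_pos hn0, Real.rpow_def_of_pos (by positivity : (0:ℝ) < μ / ρ),
        ← Real.exp_add]
      apply Real.exp_le_exp.2
      have h := mul_le_mul_of_nonneg_left hlog hμ0.le
      rw [mul_add] at h
      have hfld : μ * (ρ / μ * n) = ρ * n := by field_simp
      linarith
    have hexp : Real.exp (ρ * n) ≤ Real.exp (ρ * (k ^ η * n)) := by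
      apply Real.exp_le_exp.2
      have hh : n ≤ k ^ η * n := by nlinarith [mul_nonneg (sub_nonneg.2 hkη) hn0.le]
      exact mul_le_mul_of_nonneg_left hh hρ.le
    calc 1 + n ^ μ * k ^ μ ≤ 2 * (n ^ μ * k ^ μ) := h2
      _ ≤ 2 * (((μ / ρ) ^ μ * Real.exp (ρ * n)) * Kc μ ρ ^ μ) := by
          have h3 := mul_le_mul hnμ hkK (Real.rpow_nonneg hk0.le μ)
            (by positivity : (0:ℝ) ≤ (μ / ρ) ^ μ * Real.exp (ρ * n))
          linarith
      _ = Dc μ ρ * Real.exp (ρ * n) := by rw [Dc]; ring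
      _ ≤ Dc μ ρ * Real.exp (ρ * (k ^ η * n)) := by
          have hD0 : (0:ℝ) ≤ Dc μ ρ := le_trans zero_le_one (Dc_one_le μ ρ hμ hρ hρ1)
          exact mul_le_mul_of_nonneg_left hexp hD0
  · rw [if_neg hcase, one_mul]
    have hkK : Kc μ ρ ≤ k := le_of_not_gt hcase
    have hρk : 2 * (μ + Real.log 2) ≤ ρ * k := by
      have h : 2 * (μ + Real.log 2) = ρ * Kc μ ρ := by rw [Kc]; field_simp
      nlinarith
    have h2log := log2_pos
    have hlogn : Real.log n ≤ n := by linarith [Real.log_le_sub_one_of_pos hn0]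
    have hlogk : Real.log k ≤ k := by linarith [Real.log_le_sub_one_of_pos hk0]
    have hkk : k * k ≤ k ^ η := by
      have h1 : k ^ (2:ℝ) ≤ k ^ η := Real.rpow_le_rpow_of_exponent_le hk hη
      have h2' : k ^ (2:ℝ) = k * k := by
        rw [show (2:ℝ) = 1 + 1 by norm_num, Real.rpow_add hk0, Real.rpow_one]
      exact h2' ▸ h1
    have hmain : Real.log 2 + μ * Real.log n + μ * Real.log k ≤ ρ * (k ^ η * n) := by
      have hμn : μ * Real.log n ≤ μ * n := mul_le_mul_of_nonneg_left hlogn hμ0.le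
      have hμlk : μ * Real.log k ≤ μ * k := mul_le_mul_of_nonneg_left hlogk hμ0.le
      have t1 : μ * n ≤ ρ / 2 * (k * n) := by
        nlinarith [mul_nonneg hn0.le (by linarith : (0:ℝ) ≤ ρ * k - 2 * μ)]
      have t2 : Real.log 2 + μ * k ≤ ρ / 2 * (k * k) := by
        nlinarith [mul_nonneg hk0.le (by linarith : (0:ℝ) ≤ ρ * k - 2 * (μ + Real.log 2)),
          mul_nonneg (sub_nonneg.2 hk) h2log.le]
      have hC : ρ / 2 * (k * n) ≤ ρ / 2 * (k ^ η * n) := by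
        have hk2 : k ≤ k ^ η := by nlinarith
        exact mul_le_mul_of_nonneg_left (mul_le_mul_of_nonneg_right hk2 hn0.le)
          (by positivity)
      have hD : ρ / 2 * (k * k) ≤ ρ / 2 * (k ^ η * n) := by
        have hkn : k ^ η ≤ k ^ η * n := by
          nlinarith [mul_nonneg (Real.rpow_nonneg hk0.le η) (sub_nonneg.2 hn)]
        exact mul_le_mul_of_nonneg_left (le_trans hkk hkn) (by positivity)
      linarith
    calc 1 + n ^ μ * k ^ μ ≤ 2 * (n ^ μ * k ^ μ) := h2
      _ = Real.exp (Real.log 2 + μ * Real.log n + μ * Real.log k) := by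
          rw [Real.exp_add, Real.exp_add, Real.exp_log (by norm_num : (0:ℝ) < 2),
            Real.rpow_def_of_pos hn0, Real.rpow_def_of_pos hk0, mul_comm μ (Real.log n),
            mul_comm μ (Real.log k)]
          ring
      _ ≤ Real.exp (ρ * (k ^ η * n)) := Real.exp_le_exp.2 hmain

lemma jwt_one_le (j : ℤ) : 1 ≤ jwt j := le_max_left _ _

/-- The product bound. -/
lemma prod_bound (μ η ρ : ℝ) (hμ : 1 < μ) (hη : 2 ≤ η) (hρ : 0 < ρ) (hρ1 : ρ < 1)
    (ℓ : ℤ →₀ ℤ) :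
    ∏ j ∈ ℓ.support, (1 + |(ℓ j : ℝ)| ^ μ * jwt j ^ μ) ≤
      Real.exp (Ac μ * ρ⁻¹ ^ 2) * Real.exp (ρ * etaNorm η ℓ) := by
  have hK2 := Kc_big μ ρ hμ hρ hρ1
  have hKpos : 0 < Kc μ ρ := by linarith
  have hD1 := Dc_one_le μ ρ hμ hρ hρ1
  have hD0 : (0:ℝ) < Dc μ ρ := by linarith
  set c : ℤ → ℝ := fun j => if jwt j < Kc μ ρ then Dc μ ρ else 1 with hc
  have hc1 : ∀ j, 1 ≤ c j := by
    intro j; rw [hc]; dsimp only; split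
    · exact hD1
    · exact le_refl 1
  have step1 : ∏ j ∈ ℓ.support, (1 + |(ℓ j : ℝ)| ^ μ * jwt j ^ μ) ≤
      ∏ j ∈ ℓ.support, (c j * Real.exp (ρ * (jwt j ^ η * |(ℓ j : ℝ)|))) := by
    apply Finset.prod_le_prod
    · intro j _
      have h0 : (0:ℝ) ≤ |(ℓ j : ℝ)| ^ μ * jwt j ^ μ :=
        mul_nonneg (Real.rpow_nonneg (abs_nonneg _) _)
          (Real.rpow_nonneg (le_trans zero_le_one (jwt_one_le j)) _)
      linarith
    · intro j hj
      have hne : ℓ j ≠ 0 := Finsupp.mem_support_iff.1 hj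
      have hn : 1 ≤ |(ℓ j : ℝ)| := by
        have := Int.one_le_abs hne
        calc (1:ℝ) = ((1:ℤ):ℝ) := by norm_num
          _ ≤ ((|ℓ j| : ℤ) : ℝ) := by exact_mod_cast this
          _ = |(ℓ j : ℝ)| := by push_cast; ring
      exact factor_bound μ η ρ hμ hη hρ hρ1 _ _ hn (jwt_one_le j)
  have step2 : ∏ j ∈ ℓ.support, (c j * Real.exp (ρ * (jwt j ^ η * |(ℓ j : ℝ)|))) =
      (∏ j ∈ ℓ.support, c j) * Real.exp (ρ * etaNorm η ℓ) := by
    rw [Finset.prod_mul_distrib, ← Real.exp_sum, etaNorm, Finset.mul_sum]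
  set M : ℤ := ⌈Kc μ ρ⌉ with hM
  have hKM : Kc μ ρ ≤ (M : ℝ) := Int.le_ceil _
  have hM2 : (2:ℤ) < M := by exact_mod_cast lt_of_lt_of_le hK2 hKM
  set T : Finset ℤ := Finset.Icc (-M) M with hT
  have heq : ∏ j ∈ ℓ.support, c j = ∏ j ∈ ℓ.support ∩ T, c j := by
    refine (Finset.prod_subset Finset.inter_subset_left ?_).symm
    intro j hj hnj
    have hjT : j ∉ T := fun h => hnj (Finset.mem_inter.2 ⟨hj, h⟩)
    rw [hT, Finset.mem_Icc] at hjT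
    have hd : M < j ∨ j < -M := by omega
    have habs : (M:ℝ) < |(j:ℝ)| := by
      have h1 : M < |j| := by
        rcases hd with h | h
        · exact lt_of_lt_of_le h (le_abs_self j)
        · exact lt_of_lt_of_le (by omega) (neg_le_abs j)
      calc (M:ℝ) < ((|j| : ℤ) : ℝ) := by exact_mod_cast h1
        _ = |(j:ℝ)| := by push_cast; ring
    have hnlt : ¬ jwt j < Kc μ ρ := by
      push_neg
      calc Kc μ ρ ≤ (M:ℝ) := hKM
        _ ≤ |(j:ℝ)| := habs.le
        _ ≤ jwt j := le_max_right _ _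
    rw [hc]; dsimp only; rw [if_neg hnlt]
  have hcard : (ℓ.support ∩ T).card ≤ T.card := Finset.card_le_card Finset.inter_subset_right
  have step3 : ∏ j ∈ ℓ.support ∩ T, c j ≤ Dc μ ρ ^ T.card := by
    calc ∏ j ∈ ℓ.support ∩ T, c j ≤ ∏ _j ∈ ℓ.support ∩ T, Dc μ ρ := by
          apply Finset.prod_le_prod
          · intro j _; linarith [hc1 j]
          · intro j _
            rw [hc]; dsimp only; split
            · exact le_refl _
            · exact hD1
      _ = Dc μ ρ ^ (ℓ.support ∩ T).card := Finset.prod_const _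
      _ ≤ Dc μ ρ ^ T.card := pow_le_pow_right₀ hD1 hcard
  have hTcard : (T.card : ℝ) ≤ 4 * Kc μ ρ := by
    have h1 : T.card = (2*M+1).toNat := by
      rw [hT, Int.card_Icc]; congr 1; ring
    have h2 : ((2*M+1).toNat : ℤ) = 2*M+1 := Int.toNat_of_nonneg (by omega)
    have h3 : ((T.card : ℤ) : ℝ) = 2*(M:ℝ)+1 := by rw [h1, h2]; push_cast; ring
    have h4 : (M:ℝ) < Kc μ ρ + 1 := Int.ceil_lt_add_one _
    have h5 : ((T.card :ℤ):ℝ) = (T.card : ℝ) := by push_cast; ring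
    rw [h5] at h3
    linarith
  have hlogD : Real.log (Dc μ ρ) ≤
      (Real.log 2 + μ * (2 * (μ + Real.log 2)) + μ ^ 2) / ρ := by
    have hμρ : (0:ℝ) < μ / ρ := by positivity
    have hKμ : (0:ℝ) < Kc μ ρ ^ μ := Real.rpow_pos_of_pos hKpos _
    have hμρμ : (0:ℝ) < (μ/ρ) ^ μ := Real.rpow_pos_of_pos hμρ _
    have hsplit : Real.log (Dc μ ρ) =
        Real.log 2 + μ * Real.log (Kc μ ρ) + μ * Real.log (μ/ρ) := by
      rw [Dc, Real.log_mul (by positivity) (ne_of_gt hμρμ),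
        Real.log_mul (by norm_num) (ne_of_gt hKμ),
        Real.log_rpow hKpos, Real.log_rpow hμρ]
    have hlK : Real.log (Kc μ ρ) ≤ Kc μ ρ := by
      linarith [Real.log_le_sub_one_of_pos hKpos]
    have hlμρ : Real.log (μ/ρ) ≤ μ/ρ := by
      linarith [Real.log_le_sub_one_of_pos hμρ]
    have h2l := log2_pos
    rw [hsplit]
    have hKc_eq : Kc μ ρ = 2 * (μ + Real.log 2) / ρ := rfl
    have e1 : μ * Real.log (Kc μ ρ) ≤ μ * Kc μ ρ :=
      mul_le_mul_of_nonneg_left hlK (by linarith : (0:ℝ) ≤ μ)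
    have e2 : μ * Real.log (μ/ρ) ≤ μ ^ 2 / ρ := by
      have h := mul_le_mul_of_nonneg_left hlμρ (by linarith : (0:ℝ) ≤ μ)
      have hr : μ * (μ / ρ) = μ ^ 2 / ρ := by ring
      linarith
    have e0 : Real.log 2 ≤ Real.log 2 / ρ := by
      rw [le_div_iff₀ hρ]; nlinarith
    have hsum : (Real.log 2 + μ * (2 * (μ + Real.log 2)) + μ ^ 2) / ρ =
        Real.log 2 / ρ + μ * Kc μ ρ + μ ^ 2 / ρ := by
      rw [hKc_eq]; ring
    rw [hsum]
    linarith
  have hlogD0 : 0 ≤ Real.log (Dc μ ρ) := Real.log_nonneg hD1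
  have step4 : Dc μ ρ ^ T.card ≤ Real.exp (Ac μ * ρ⁻¹ ^ 2) := by
    have hpow : Dc μ ρ ^ T.card = Real.exp ((T.card : ℝ) * Real.log (Dc μ ρ)) := by
      rw [← Real.log_pow, Real.exp_log (pow_pos hD0 _)]
    rw [hpow]
    apply Real.exp_le_exp.2
    have hmul := mul_le_mul hTcard hlogD hlogD0 (by positivity : (0:ℝ) ≤ 4 * Kc μ ρ)
    have heqA : 4 * Kc μ ρ * ((Real.log 2 + μ * (2 * (μ + Real.log 2)) + μ ^ 2) / ρ) =
        Ac μ * ρ⁻¹ ^ 2 := by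
      simp only [Kc, Ac]; field_simp
    linarith [heqA ▸ hmul]
  calc ∏ j ∈ ℓ.support, (1 + |(ℓ j : ℝ)| ^ μ * jwt j ^ μ) ≤
      ∏ j ∈ ℓ.support, (c j * Real.exp (ρ * (jwt j ^ η * |(ℓ j : ℝ)|))) := step1
    _ = (∏ j ∈ ℓ.support, c j) * Real.exp (ρ * etaNorm η ℓ) := step2
    _ ≤ Real.exp (Ac μ * ρ⁻¹ ^ 2) * Real.exp (ρ * etaNorm η ℓ) := by
        have hle : ∏ j ∈ ℓ.support, c j ≤ Real.exp (Ac μ * ρ⁻¹ ^ 2) := by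
          rw [heq]; exact le_trans step3 step4
        exact mul_le_mul_of_nonneg_right hle (Real.exp_pos _).le

end WDAux

/-- **The weak Diophantine condition covers the Diophantine case**: any
infinite-dimensional Diophantine frequency `ω ∈ D_{γ,μ}` satisfies the weak Diophantine
condition, i.e. there is a control function `E` (continuous, strictly decreasing,
positive, together with positive summable sequences `δ_m` and `ρ_m = E⁻¹(exp(2^m δ_m))`,
so that `E(ρ_m) ≤ exp(2^m δ_m)`) such that the solution of the homological equation
satisfies `Σ_{ℓ≠0} (|g(ℓ)|/|ω·ℓ|) e^{σ|ℓ|_η} ≤ E(ρ) Σ_ℓ |g(ℓ)| e^{(σ+ρ)|ℓ|_η}`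
(here the `ℓ = 0` term on the left vanishes since `g(0) = 0`). -/
theorem diophantine_implies_weak_diophantine
    (μ η γ : ℝ) (hμ : 1 < μ) (hη : 2 ≤ η) (hγ : γ ∈ Set.Ioo (0 : ℝ) 1)
    (ω : ℤ → ℝ) (hω : IsDiophantine γ μ ω) :
    ∃ E : ℝ → ℝ,
      ContinuousOn E (Set.Ioi 0) ∧ StrictAntiOn E (Set.Ioi 0) ∧
      (∀ ρ : ℝ, 0 < ρ → 0 < E ρ) ∧
      ∃ δ ρs : ℕ → ℝ,
        (∀ m, 0 < δ m) ∧ (∀ m, 0 < ρs m) ∧ Summable δ ∧ Summable ρs ∧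
        (∀ m : ℕ, E (ρs m) ≤ Real.exp (2 ^ m * δ m)) ∧
        (∀ σ : ℝ, 0 < σ → ∀ ρ ∈ Set.Ioo (0 : ℝ) 1, ∀ g : (ℤ →₀ ℤ) → ℂ, g 0 = 0 →
          ∑' ℓ : ℤ →₀ ℤ, ENNReal.ofReal
              (‖g ℓ‖ / |omegaDot ω ℓ| * Real.exp (σ * etaNorm η ℓ)) ≤
            ENNReal.ofReal (E ρ) *
              ∑' ℓ : ℤ →₀ ℤ, ENNReal.ofReal (‖g ℓ‖ * Real.exp ((σ + ρ) * etaNorm η ℓ))) := by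
  obtain ⟨hγ0, hγ1⟩ := hγ
  have hA := WDAux.Ac_pos μ hμ
  have hlogγ : Real.log γ < 0 := Real.log_neg hγ0 hγ1
  refine ⟨fun ρ => Real.exp (WDAux.Ac μ * ρ⁻¹ ^ 2) / γ, ?_, ?_, ?_, ?_⟩
  · -- continuity
    apply ContinuousOn.div_const
    apply Real.continuous_exp.comp_continuousOn
    apply ContinuousOn.mul continuousOn_const
    exact (ContinuousOn.inv₀ continuousOn_id (fun x hx => ne_of_gt hx)).pow 2
  · -- strict antitonicity
    intro a ha b hb hab
    dsimp only
    rw [Set.mem_Ioi] at ha hb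
    have h1 : b⁻¹ < a⁻¹ := by
      rw [inv_lt_inv₀ hb ha]; exact hab
    have ha0 : 0 < a⁻¹ := by positivity
    have hb0 : 0 < b⁻¹ := by positivity
    have h2 : b⁻¹ ^ 2 < a⁻¹ ^ 2 := by nlinarith
    have h3 : WDAux.Ac μ * b⁻¹ ^ 2 < WDAux.Ac μ * a⁻¹ ^ 2 :=
      mul_lt_mul_of_pos_left h2 hA
    have h4 := Real.exp_lt_exp.2 h3
    exact div_lt_div_of_pos_right h4 hγ0
  · intro ρ hρ
    dsimp only
    exact div_pos (Real.exp_pos _) hγ0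
  refine ⟨fun m => (WDAux.Ac μ - Real.log γ) * (3/4) ^ m, fun m => (9/10) ^ m,
    ?_, ?_, ?_, ?_, ?_, ?_⟩
  · intro m
    exact mul_pos (by linarith) (by positivity)
  · intro m; positivity
  · exact (summable_geometric_of_lt_one (by norm_num) (by norm_num)).mul_left _
  · exact summable_geometric_of_lt_one (by norm_num) (by norm_num)
  · -- E (ρs m) ≤ exp (2^m δ m)
    intro m
    dsimp only
    have hinv : (((9/10 : ℝ) ^ m)⁻¹) ^ 2 = (100/81 : ℝ) ^ m := by
      rw [← inv_pow, ← pow_right_comm]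
      norm_num
    have hγe : γ⁻¹ = Real.exp (-Real.log γ) := by
      rw [Real.exp_neg, Real.exp_log hγ0]
    rw [div_eq_mul_inv, hinv, hγe, ← Real.exp_add]
    apply Real.exp_le_exp.2
    have hp1 : ((100:ℝ)/81) ^ m ≤ ((3:ℝ)/2) ^ m := by
      apply pow_le_pow_left₀ (by norm_num) (by norm_num)
    have hp2 : (1:ℝ) ≤ ((3:ℝ)/2) ^ m := one_le_pow₀ (by norm_num)
    have hmp : (2:ℝ) ^ m * ((WDAux.Ac μ - Real.log γ) * (3/4) ^ m) =
        (WDAux.Ac μ - Real.log γ) * ((3:ℝ)/2) ^ m := by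
      rw [show ((3:ℝ)/2) = 2 * (3/4) by norm_num, mul_pow]; ring
    rw [hmp]
    nlinarith [mul_le_mul_of_nonneg_left hp1 hA.le]
  · -- the main estimate
    intro σ hσ ρ hρm g hg0
    obtain ⟨hρ0, hρ1⟩ := hρm
    have hEnn : (0:ℝ) ≤ Real.exp (WDAux.Ac μ * ρ⁻¹ ^ 2) / γ := by positivity
    rw [← ENNReal.tsum_mul_left]
    apply ENNReal.tsum_le_tsum
    intro ℓ
    by_cases hne : ℓ = 0
    · subst hne
      simp [hg0]
    · rw [← ENNReal.ofReal_mul hEnn]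
      apply ENNReal.ofReal_le_ofReal
      -- the pointwise real inequality
      set N := etaNorm η ℓ with hN
      set P := ∏ j ∈ ℓ.support, (1 + |(ℓ j : ℝ)| ^ μ * jwt j ^ μ) with hP
      have hP1 : (1:ℝ) ≤ P := by
        rw [hP]
        calc (1:ℝ) = ∏ _j ∈ ℓ.support, (1:ℝ) := (Finset.prod_const_one).symm
          _ ≤ _ := by
            apply Finset.prod_le_prod (fun _ _ => zero_le_one)
            intro j _
            have h0 : (0:ℝ) ≤ |(ℓ j : ℝ)| ^ μ * jwt j ^ μ :=
              mul_nonneg (Real.rpow_nonneg (abs_nonneg _) _)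
                (Real.rpow_nonneg (le_trans zero_le_one (WDAux.jwt_one_le j)) _)
            linarith
      have hP0 : (0:ℝ) < P := by linarith
      have hd : γ * P⁻¹ < |omegaDot ω ℓ| := by
        have := hω ℓ hne
        rwa [Finset.prod_inv_distrib, ← hP] at this
      have hω0 : 0 < |omegaDot ω ℓ| := lt_trans (by positivity) hd
      have hinv : |omegaDot ω ℓ|⁻¹ ≤ γ⁻¹ * P := by
        have h1 : |omegaDot ω ℓ|⁻¹ < (γ * P⁻¹)⁻¹ :=
          inv_strictAnti₀ (by positivity) hd
        rw [mul_inv, inv_inv] at h1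
        exact h1.le
      have hPB := WDAux.prod_bound μ η ρ hμ hη hρ0 hρ1 ℓ
      rw [← hP, ← hN] at hPB
      have hEexp : Real.exp ((σ + ρ) * N) = Real.exp (σ * N) * Real.exp (ρ * N) := by
        rw [← Real.exp_add]; ring_nf
      have hg : (0:ℝ) ≤ ‖g ℓ‖ := norm_nonneg _
      calc ‖g ℓ‖ / |omegaDot ω ℓ| * Real.exp (σ * N)
          = ‖g ℓ‖ * Real.exp (σ * N) * |omegaDot ω ℓ|⁻¹ := by
            rw [div_eq_mul_inv]; ring
        _ ≤ ‖g ℓ‖ * Real.exp (σ * N) * (γ⁻¹ * P) := by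
            apply mul_le_mul_of_nonneg_left hinv (by positivity)
        _ ≤ ‖g ℓ‖ * Real.exp (σ * N) *
              (γ⁻¹ * (Real.exp (WDAux.Ac μ * ρ⁻¹ ^ 2) * Real.exp (ρ * N))) := by
            apply mul_le_mul_of_nonneg_left _ (by positivity)
            exact mul_le_mul_of_nonneg_left hPB (by positivity)
        _ = Real.exp (WDAux.Ac μ * ρ⁻¹ ^ 2) / γ * (‖g ℓ‖ * Real.exp ((σ + ρ) * N)) := by
            rw [hEexp, div_eq_mul_inv]; ring

end
end
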